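/- arXiv:1610.04199 — 4 statements merged into one kernel-verified Lean document; each statement's English description precedes it below -/
import Mathlib

section
/- Let C be a random subset of {1,...,n} and let S_1, S_2, ... be independent random subsets of {1,...,n}, each distributed as C. Let α ∈ [0,1]. If there exists a set 𝒜 ∈ Π(α,C) with P(C ⊆ 𝒜) > 1−α, then almost surely there exists M such that for all m > M, every element of Ŝ(α, S_{1:m}) belongs to Π(α,C). -/
/-!
By the strong law of large numbers, almost surely `rel(A, S_{1:m}) → P(C ⊆ A)` simultaneously
for the finitely many `A`. Since `P(C ⊆ 𝒜) > 1 - α`, eventually `𝒜` is feasible for the sample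
problem, so every sample solution has cardinality at most `#𝒜`, the optimal value of `Π(α,C)`;
and eventually every `A` with `P(C ⊆ A) < 1 - α` is infeasible for the sample problem, so every
sample solution is feasible for `Π(α,C)`.

The `S i` are not assumed measurable: that their fibres have the same (outer) measures as those of
the measurable `C` is what makes them almost everywhere measurable.
-/

open MeasureTheory

/-- The relative frequency with which the sets `s 0, …, s (m-1)` are covered by `A`. -/
noncomputable def rel (n : ℕ) (A : Finset (Fin n)) (m : ℕ) (s : ℕ → Finset (Fin n)) : ℝ :=
  (∑ i ∈ Finset.range m, if s i ⊆ A then (1 : ℝ) else 0) / m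

/-- `Π(α,C)`: the set of smallest simultaneous `α`-level credible regions, i.e. the sets
`A ⊆ {1,…,n}` with `P(C ⊆ A) ≥ 1 - α` of minimal cardinality among all such sets. -/
def credPi {Ω : Type} [MeasurableSpace Ω] (P : Measure Ω) {n : ℕ}
    (C : Ω → Finset (Fin n)) (α : ℝ) : Set (Finset (Fin n)) :=
  {A | 1 - α ≤ (P {ω | C ω ⊆ A}).toReal ∧
    ∀ B : Finset (Fin n), 1 - α ≤ (P {ω | C ω ⊆ B}).toReal → A.card ≤ B.card}

/-- `Ŝ(α, s_{1:m})`: the sample based problem, i.e. the sets `A ⊆ {1,…,n}` with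
`rel(A, s_{1:m}) ≥ 1 - α` of minimal cardinality among all such sets. -/
def sampleSol (n : ℕ) (α : ℝ) (m : ℕ) (s : ℕ → Finset (Fin n)) : Set (Finset (Fin n)) :=
  {A | 1 - α ≤ rel n A m s ∧
    ∀ B : Finset (Fin n), 1 - α ≤ rel n B m s → A.card ≤ B.card}

open Filter Topology ProbabilityTheory

namespace MeasureTheory

variable {Ω α : Type*} {mΩ : MeasurableSpace Ω} {μ : Measure Ω}

/-- The measurable hulls `H ⊇ s` and `K ⊇ sᶜ` cover `Ω` with `μ H + μ K ≤ μ Ω`, so `H ∩ K` is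
null, and it contains `H \ s`. -/
theorem nullMeasurableSet_of_measure_add_measure_compl_le [IsFiniteMeasure μ] {s : Set Ω}
    (h : μ s + μ sᶜ ≤ μ Set.univ) : NullMeasurableSet s μ := by
  set H := toMeasurable μ s
  set K := toMeasurable μ sᶜ
  have hHK : H ∪ K = Set.univ :=
    Set.eq_univ_of_univ_subset fun ω _ => by
      by_cases hω : ω ∈ s
      · exact Or.inl (subset_toMeasurable μ s hω)
      · exact Or.inr (subset_toMeasurable μ sᶜ hω)
  have hnull : μ (H ∩ K) = 0 := by
    have := measure_union_add_inter (μ := μ) H (measurableSet_toMeasurable μ sᶜ)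
    rw [hHK, measure_toMeasurable, measure_toMeasurable] at this
    have hle : μ Set.univ + μ (H ∩ K) ≤ μ Set.univ + 0 := by rw [add_zero, this]; exact h
    exact nonpos_iff_eq_zero.1 (ENNReal.le_of_add_le_add_left (measure_ne_top μ _) hle)
  have hdiff : H \ s ⊆ H ∩ K := fun ω hω => ⟨hω.1, subset_toMeasurable μ sᶜ hω.2⟩
  rw [← Set.sdiff_sdiff_cancel_left (subset_toMeasurable μ s)]
  exact (measurableSet_toMeasurable μ s).nullMeasurableSet.diff
    (NullMeasurableSet.of_null (measure_mono_null hdiff hnull))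

theorem nullMeasurableSet_fiber_of_sum_measure_fiber_le [IsFiniteMeasure μ] [Fintype α]
    {T : Ω → α} (h : ∑ a, μ (T ⁻¹' {a}) ≤ μ Set.univ) (a : α) :
    NullMeasurableSet (T ⁻¹' {a}) μ := by
  classical
  refine nullMeasurableSet_of_measure_add_measure_compl_le (le_trans ?_ h)
  have hcompl : (T ⁻¹' {a})ᶜ = ⋃ b ∈ Finset.univ.erase a, T ⁻¹' {b} := by
    ext ω
    simp [eq_comm]
  rw [hcompl, ← Finset.add_sum_erase _ _ (Finset.mem_univ a)]
  gcongr
  exact measure_biUnion_finset_le _ _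

theorem aemeasurable_of_sum_measure_fiber_le [IsFiniteMeasure μ] [Fintype α] [MeasurableSpace α]
    [MeasurableSpace.CountablyGenerated α] {T : Ω → α}
    (h : ∑ a, μ (T ⁻¹' {a}) ≤ μ Set.univ) : AEMeasurable T μ := by
  refine NullMeasurable.aemeasurable fun s _ => ?_
  rw [← Set.biUnion_preimage_singleton]
  exact .biUnion s.to_countable fun a _ => nullMeasurableSet_fiber_of_sum_measure_fiber_le h a

theorem identDistrib_of_measure_fiber_eq [MeasurableSpace α] [MeasurableSingletonClass α]
    [Countable α] {T C : Ω → α} (hT : AEMeasurable T μ) (hC : AEMeasurable C μ)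
    (h : ∀ a, μ (T ⁻¹' {a}) = μ (C ⁻¹' {a})) : IdentDistrib T C μ μ where
  aemeasurable_fst := hT
  aemeasurable_snd := hC
  map_eq := Measure.ext_of_singleton fun a => by
    rw [Measure.map_apply_of_aemeasurable hT (measurableSet_singleton a),
      Measure.map_apply_of_aemeasurable hC (measurableSet_singleton a), h]

theorem ae_tendsto_frequency [IsFiniteMeasure μ] [MeasurableSpace α] {S : ℕ → Ω → α}
    {C : Ω → α} (hindep : iIndepFun S μ) (hident : ∀ i, IdentDistrib (S i) C μ μ) {E : Set α}
    (hE : MeasurableSet E) :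
    ∀ᵐ ω ∂μ, Tendsto (fun m : ℕ => (∑ i ∈ Finset.range m, E.indicator (1 : α → ℝ) (S i ω)) / m)
      atTop (𝓝 (μ.real (C ⁻¹' E))) := by
  set f : α → ℝ := E.indicator 1
  have hf : Measurable f := measurable_const.indicator hE
  have hC : AEMeasurable C μ := (hident 0).aemeasurable_snd
  have hfC : ∀ i, IdentDistrib (f ∘ S i) (f ∘ C) μ μ := fun i => (hident i).comp hf
  have hint : Integrable (f ∘ C) μ :=
    ((integrable_const (1 : ℝ)).indicator hE).comp_aemeasurable hC
  have hmean : μ[f ∘ C] = μ.real (C ⁻¹' E) := by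
    rw [Function.comp_def, ← integral_map hC hf.aestronglyMeasurable, integral_indicator_one hE,
      map_measureReal_apply_of_aemeasurable hC hE]
  have hsl := strong_law_ae_real (fun i => f ∘ S i) ((hfC 0).integrable_iff.2 hint)
    (fun i j hij => (hindep.comp (fun _ => f) fun _ => hf).indepFun hij)
    fun i => (hfC i).trans (hfC 0).symm
  rwa [(hfC 0).integral_eq, hmean] at hsl

end MeasureTheory

theorem ae_forall_tendsto_rel {Ω : Type} [MeasurableSpace Ω] {P : Measure Ω} [IsFiniteMeasure P]
    {n : ℕ} {C : Ω → Finset (Fin n)} {S : ℕ → Ω → Finset (Fin n)}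
    (hCmeas : ∀ A : Finset (Fin n), MeasurableSet {ω | C ω = A})
    (hindep : iIndepFun (m := fun _ : ℕ => (⊤ : MeasurableSpace (Finset (Fin n)))) S P)
    (hident : ∀ (i : ℕ) (A : Finset (Fin n)), P {ω | S i ω = A} = P {ω | C ω = A}) :
    ∀ᵐ ω ∂P, ∀ A : Finset (Fin n),
      Tendsto (fun m => rel n A m (fun i => S i ω)) atTop (𝓝 (P {ω | C ω ⊆ A}).toReal) := by
  let _ : MeasurableSpace (Finset (Fin n)) := ⊤
  have hC : Measurable C := measurable_to_countable' hCmeas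
  have hfibers : ∀ i, ∑ A, P (S i ⁻¹' {A}) = P Set.univ := fun i =>
    calc ∑ A, P (S i ⁻¹' {A})
        = ∑ A, P (C ⁻¹' {A}) := Finset.sum_congr rfl fun A _ => hident i A
      _ = P Set.univ := by
        rw [sum_measure_preimage_singleton _ fun A _ => hCmeas A, Finset.coe_univ,
          Set.preimage_univ]
  have hS : ∀ i, IdentDistrib (S i) C P P := fun i =>
    identDistrib_of_measure_fiber_eq (aemeasurable_of_sum_measure_fiber_le (hfibers i).le)
      hC.aemeasurable (hident i)
  rw [ae_all_iff]
  intro A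
  filter_upwards [ae_tendsto_frequency hindep hS (MeasurableSet.of_discrete (s := {B | B ⊆ A}))]
    with ω hω
  convert hω using 2
  · simp [rel, Set.indicator_apply]
  · rfl

theorem eventually_sampleSol_subset_credPi {Ω : Type} [MeasurableSpace Ω] {P : Measure Ω}
    {n : ℕ} {C : Ω → Finset (Fin n)} {α : ℝ} {𝒜 : Finset (Fin n)} {s : ℕ → Finset (Fin n)}
    (hs : ∀ A, Tendsto (fun m => rel n A m s) atTop (𝓝 (P {ω | C ω ⊆ A}).toReal))
    (h𝒜 : 𝒜 ∈ credPi P C α) (h𝒜strict : 1 - α < (P {ω | C ω ⊆ 𝒜}).toReal) :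
    ∀ᶠ m in atTop, sampleSol n α m s ⊆ credPi P C α := by
  have h𝒜feasible : ∀ᶠ m in atTop, 1 - α ≤ rel n 𝒜 m s :=
    ((hs 𝒜).eventually_const_lt h𝒜strict).mono fun _ => le_of_lt
  have hinfeasible : ∀ᶠ m in atTop, ∀ A,
      (P {ω | C ω ⊆ A}).toReal < 1 - α → rel n A m s < 1 - α :=
    eventually_all.2 fun A => eventually_imp_distrib_left.2 fun h => (hs A).eventually_lt_const h
  filter_upwards [h𝒜feasible, hinfeasible] with m h𝒜m hinf A ⟨hA, hAmin⟩
  exact ⟨not_lt.1 fun hlt => (hinf A hlt).not_ge hA,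
    fun B hB => (hAmin 𝒜 h𝒜m).trans (h𝒜.2 B hB)⟩

theorem stmt0_general {Ω : Type} [MeasurableSpace Ω] (P : Measure Ω) [IsProbabilityMeasure P]
    (n : ℕ) (C : Ω → Finset (Fin n)) (S : ℕ → Ω → Finset (Fin n))
    (hCmeas : ∀ A : Finset (Fin n), MeasurableSet {ω | C ω = A})
    (hindep : ProbabilityTheory.iIndepFun
      (m := fun _ : ℕ => (⊤ : MeasurableSpace (Finset (Fin n)))) S P)
    (hident : ∀ (i : ℕ) (A : Finset (Fin n)), P {ω | S i ω = A} = P {ω | C ω = A})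
    (α : ℝ)
    (𝒜 : Finset (Fin n)) (h𝒜 : 𝒜 ∈ credPi P C α)
    (h𝒜strict : 1 - α < (P {ω | C ω ⊆ 𝒜}).toReal) :
    ∀ᵐ ω ∂P, ∃ M : ℕ, ∀ m > M, sampleSol n α m (fun i => S i ω) ⊆ credPi P C α := by
  filter_upwards [ae_forall_tendsto_rel hCmeas hindep hident] with ω hω
  obtain ⟨M, hM⟩ := eventually_atTop.1 (eventually_sampleSol_subset_credPi hω h𝒜 h𝒜strict)
  exact ⟨M, fun m hm => hM m hm.le⟩

/-- Let `C` be a random subset of `{1,…,n}` and `S 0, S 1, …` independent random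
subsets of `{1,…,n}`, each distributed as `C`, and `α ∈ [0,1]`. If there exists
`𝒜 ∈ Π(α,C)` with `P(C ⊆ 𝒜) > 1 - α`, then almost surely there exists `M` such that for all
`m > M` every element of `Ŝ(α, S_{1:m})` belongs to `Π(α,C)`. -/
theorem stmt0 {Ω : Type} [MeasurableSpace Ω] (P : Measure Ω) [IsProbabilityMeasure P]
    (n : ℕ) (C : Ω → Finset (Fin n)) (S : ℕ → Ω → Finset (Fin n))
    (hCmeas : ∀ A : Finset (Fin n), MeasurableSet {ω | C ω = A})
    (hindep : ProbabilityTheory.iIndepFun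
      (m := fun _ : ℕ => (⊤ : MeasurableSpace (Finset (Fin n)))) S P)
    (hident : ∀ (i : ℕ) (A : Finset (Fin n)), P {ω | S i ω = A} = P {ω | C ω = A})
    (α : ℝ) (hα : α ∈ Set.Icc (0 : ℝ) 1)
    (𝒜 : Finset (Fin n)) (h𝒜 : 𝒜 ∈ credPi P C α)
    (h𝒜strict : 1 - α < (P {ω | C ω ⊆ 𝒜}).toReal) :
    ∀ᵐ ω ∂P, ∃ M : ℕ, ∀ m > M, sampleSol n α m (fun i => S i ω) ⊆ credPi P C α :=
  stmt0_general P n C S hCmeas hindep hident α 𝒜 h𝒜 h𝒜strict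
end

section
/- Let C be a random subset of {1,...,n} and α ∈ [0,1]. Then the set {i ∈ {1,...,n} : P(i ∈ C) > α} is contained in every element of Π(α,C), i.e. in every smallest simultaneous α-level credible region. -/
open MeasureTheory

/-- Since `Finset α` is countable, `{i ∈ C}` is a countable union of the level sets `{C = B}`. -/
theorem measurableSet_mem_of_measurableSet_eq {Ω α : Type*} [MeasurableSpace Ω] [Countable α]
    {C : Ω → Finset α} (hC : ∀ B : Finset α, MeasurableSet {ω | C ω = B}) (i : α) :
    MeasurableSet {ω | i ∈ C ω} := by
  have hunion : {ω | i ∈ C ω} = ⋃ B ∈ {B : Finset α | i ∈ B}, {ω | C ω = B} := by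
    ext ω
    simp
  rw [hunion]
  exact .biUnion (Set.to_countable _) fun B _ => hC B

/-- A region missing `i` can only cover `C` when `i ∉ C`. -/
theorem measureReal_subset_le_one_sub_measureReal_mem {Ω α : Type*} [MeasurableSpace Ω]
    (P : Measure Ω) [IsProbabilityMeasure P] {C : Ω → Finset α} {A : Finset α} {i : α}
    (hmem : MeasurableSet {ω | i ∈ C ω}) (hiA : i ∉ A) :
    P.real {ω | C ω ⊆ A} ≤ 1 - P.real {ω | i ∈ C ω} := by
  rw [← probReal_compl_eq_one_sub hmem]
  exact measureReal_mono fun ω hω hi => hiA (hω hi)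

theorem stmt6_general {Ω : Type} [MeasurableSpace Ω] (P : Measure Ω) [IsProbabilityMeasure P]
    (n : ℕ) (C : Ω → Finset (Fin n))
    (hCmeas : ∀ A : Finset (Fin n), MeasurableSet {ω | C ω = A})
    (α : ℝ) :
    ∀ A ∈ credPi P C α, ∀ i : Fin n, α < (P {ω | i ∈ C ω}).toReal → i ∈ A := by
  rintro A ⟨hcover, -⟩ i hi
  by_contra hiA
  have hbound := measureReal_subset_le_one_sub_measureReal_mem P
    (measurableSet_mem_of_measurableSet_eq hCmeas i) hiA
  rw [measureReal_def, measureReal_def] at hbound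
  linarith

/-- The set `{i : P(i ∈ C) > α}` is contained in every element of `Π(α,C)`,
i.e. in every smallest simultaneous `α`-level credible region. -/
theorem stmt6 {Ω : Type} [MeasurableSpace Ω] (P : Measure Ω) [IsProbabilityMeasure P]
    (n : ℕ) (C : Ω → Finset (Fin n))
    (hCmeas : ∀ A : Finset (Fin n), MeasurableSet {ω | C ω = A})
    (α : ℝ) (hα : α ∈ Set.Icc (0 : ℝ) 1) :
    ∀ A ∈ credPi P C α, ∀ i : Fin n, α < (P {ω | i ∈ C ω}).toReal → i ∈ A :=
  stmt6_general P n C hCmeas α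
end

section
/- Let s_1, ..., s_m ⊆ {1,...,n} and α ∈ [0,1]. A pair of binary assignments (U_1,...,U_n) ∈ {0,1}^n and (F_1,...,F_m) ∈ {0,1}^m is ILP-feasible if (I) Σ_{j=1}^m F_j ≥ m·(1−α) and (II) for every i ∈ {1,...,n}, Σ_{j : i ∈ s_j} (1−F_j) ≥ #{j : i ∈ s_j}·(1−U_i). Then the minimum of Σ_{i=1}^n U_i over ILP-feasible assignments equals the minimum of #A over sets A ⊆ {1,...,n} with rel(A, s_{1:m}) ≥ 1−α, and if (U,F) attains the ILP minimum then A = {i : U_i = 1} satisfies rel(A, s_{1:m}) ≥ 1−α and A ∈ Ŝ(α, s_{1:m}). -/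
open MeasureTheory

/-- `(U, F)` is a feasible assignment of the ILP formulation of the sample based problem:
the `U i` and `F j` are binary, **(I)** `Σⱼ F j ≥ m·(1-α)`, and **(II)** for every time point
`i`, `Σ_{j : i ∈ s j} (1 - F j) ≥ #{j : i ∈ s j}·(1 - U i)`. -/
def ILPFeasible (n m : ℕ) (s : ℕ → Finset (Fin n)) (α : ℝ)
    (U : Fin n → ℕ) (F : ℕ → ℕ) : Prop :=
  (∀ i : Fin n, U i ≤ 1) ∧ (∀ j ∈ Finset.range m, F j ≤ 1) ∧
  ((m : ℝ) * (1 - α) ≤ ∑ j ∈ Finset.range m, (F j : ℝ)) ∧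
  ∀ i : Fin n,
    (((Finset.range m).filter (fun j => i ∈ s j)).card : ℝ) * (1 - (U i : ℝ)) ≤
      ∑ j ∈ (Finset.range m).filter (fun j => i ∈ s j), (1 - (F j : ℝ))

/-! A feasible `(U, F)` and the set `A = {i | U i = 1}` correspond to each other. Constraint (II)
forbids keeping a sample `s j` (`F j = 1`) that contains a point outside `A`, so every kept
sample is covered by `A`, and (I) turns into `rel(A) ≥ 1 - α`, while `#A ≤ Σ U`. Conversely a
set `A` with `rel(A) ≥ 1 - α` gives the feasible pair `U = 1_A`, `F j = 1[s j ⊆ A]` with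
`Σ U = #A`. -/

open Finset

theorem Finset.card_filter_eq_one_le_sum {ι : Type*} (t : Finset ι) (f : ι → ℕ) :
    #(t.filter (fun i => f i = 1)) ≤ ∑ i ∈ t, f i := by
  rw [card_filter]
  exact sum_le_sum fun i _ => by split_ifs <;> omega

section ILP

variable {n m : ℕ} {s : ℕ → Finset (Fin n)} {α : ℝ}

theorem one_sub_le_rel_iff (hm : 0 < m) (A : Finset (Fin n)) :
    1 - α ≤ rel n A m s ↔
      (m : ℝ) * (1 - α) ≤ ∑ j ∈ range m, if s j ⊆ A then (1 : ℝ) else 0 := by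
  rw [rel, le_div_iff₀ (by exact_mod_cast hm), mul_comm]

theorem ilpFeasible_of_one_sub_le_rel (hm : 0 < m) {A : Finset (Fin n)}
    (hA : 1 - α ≤ rel n A m s) :
    ILPFeasible n m s α (fun i => if i ∈ A then 1 else 0) (fun j => if s j ⊆ A then 1 else 0) := by
  refine ⟨fun i => by beta_reduce; split_ifs <;> simp, fun j _ => by beta_reduce; split_ifs <;> simp,
    ?_, fun i => ?_⟩
  · rw [one_sub_le_rel_iff hm] at hA
    convert hA using 2 with j
    push_cast
    rfl
  · by_cases hi : i ∈ A
    · simp only [hi, if_true, Nat.cast_one, sub_self, mul_zero]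
      exact sum_nonneg fun j _ => by split_ifs <;> simp
    · have hnot : ∀ j ∈ (range m).filter (fun j => i ∈ s j), ¬ s j ⊆ A :=
        fun j hj hsub => hi (hsub (mem_filter.1 hj).2)
      simp [hi, sum_ite_of_false hnot]

namespace ILPFeasible

variable {U : Fin n → ℕ} {F : ℕ → ℕ}

/-- Each summand `1 - F j` of constraint (II) is at most `1`, so at a point with `U i = 0` the
constraint forces all of them to equal `1`. -/
theorem F_eq_zero_of_U_eq_zero (h : ILPFeasible n m s α U F) {i : Fin n} (hUi : U i = 0)
    {j : ℕ} (hj : j ∈ range m) (hij : i ∈ s j) : F j = 0 := by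
  set T := (range m).filter (fun j => i ∈ s j)
  have hle : ∀ j ∈ T, 1 - (F j : ℝ) ≤ 1 := fun j _ => by simp
  have hcount := h.2.2.2 i
  simp only [hUi, Nat.cast_zero, sub_zero, mul_one] at hcount
  have hsum : ∑ j ∈ T, (1 - (F j : ℝ)) = ∑ j ∈ T, (1 : ℝ) :=
    le_antisymm (sum_le_sum hle) (by simpa using hcount)
  have := (sum_eq_sum_iff_of_le hle).1 hsum j (mem_filter.2 ⟨hj, hij⟩)
  exact_mod_cast sub_eq_self.1 this

theorem subset_of_F_ne_zero (h : ILPFeasible n m s α U F) {j : ℕ} (hj : j ∈ range m)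
    (hFj : F j ≠ 0) : s j ⊆ univ.filter (fun i => U i = 1) := by
  intro i hij
  have hUi : U i ≤ 1 := h.1 i
  by_contra hi
  have hUi0 : U i = 0 := by simp only [mem_filter, mem_univ, true_and] at hi; omega
  exact hFj (h.F_eq_zero_of_U_eq_zero hUi0 hj hij)

theorem one_sub_le_rel (hm : 0 < m) (h : ILPFeasible n m s α U F) :
    1 - α ≤ rel n (univ.filter (fun i => U i = 1)) m s := by
  rw [one_sub_le_rel_iff hm]
  refine h.2.2.1.trans (sum_le_sum fun j hj => ?_)
  have hFj : F j ≤ 1 := h.2.1 j hj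
  rcases Nat.eq_zero_or_pos (F j) with hF | hF
  · simp only [hF, Nat.cast_zero]
    split_ifs <;> simp
  · rw [if_pos (h.subset_of_F_ne_zero hj hF.ne'), show F j = 1 by omega, Nat.cast_one]

end ILPFeasible

end ILP

theorem stmt14_general (n m : ℕ) (hm : 0 < m) (s : ℕ → Finset (Fin n))
    (α : ℝ) :
    (sInf {k : ℕ | ∃ U F, ILPFeasible n m s α U F ∧ (∑ i : Fin n, U i) = k} =
      sInf {k : ℕ | ∃ A : Finset (Fin n), 1 - α ≤ rel n A m s ∧ A.card = k}) ∧
    ∀ U F, ILPFeasible n m s α U F →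
      (∀ U' F', ILPFeasible n m s α U' F' → (∑ i : Fin n, U i) ≤ ∑ i : Fin n, U' i) →
      1 - α ≤ rel n (Finset.univ.filter (fun i => U i = 1)) m s ∧
        Finset.univ.filter (fun i => U i = 1) ∈ sampleSol n α m s := by
  have sum_indicator (A : Finset (Fin n)) : ∑ i : Fin n, (if i ∈ A then 1 else 0) = #A := by
    rw [sum_boole, filter_univ_mem, Nat.cast_id]
  refine ⟨csInf_eq_csInf_of_forall_exists_le ?_ ?_, fun U F h hopt => ?_⟩
  · rintro _ ⟨U, F, h, rfl⟩
    exact ⟨_, ⟨_, h.one_sub_le_rel hm, rfl⟩, card_filter_eq_one_le_sum _ U⟩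
  · rintro _ ⟨A, hA, rfl⟩
    exact ⟨_, ⟨_, _, ilpFeasible_of_one_sub_le_rel hm hA, rfl⟩, (sum_indicator A).le⟩
  · have hrel := h.one_sub_le_rel hm
    refine ⟨hrel, hrel, fun B hB => ?_⟩
    calc #(univ.filter (fun i => U i = 1)) ≤ ∑ i, U i := card_filter_eq_one_le_sum _ U
      _ ≤ ∑ i, (if i ∈ B then 1 else 0) := hopt _ _ (ilpFeasible_of_one_sub_le_rel hm hB)
      _ = #B := sum_indicator B

/-- The minimum of `Σᵢ U i` over ILP-feasible assignments equals the minimum of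
`#A` over sets `A` with `rel(A, s_{1:m}) ≥ 1 - α`, and if `(U, F)` attains the ILP minimum
then `A = {i : U i = 1}` satisfies `rel(A, s_{1:m}) ≥ 1 - α` and `A ∈ Ŝ(α, s_{1:m})`. -/
theorem stmt14 (n m : ℕ) (hm : 0 < m) (s : ℕ → Finset (Fin n))
    (α : ℝ) (hα : α ∈ Set.Icc (0 : ℝ) 1) :
    (sInf {k : ℕ | ∃ U F, ILPFeasible n m s α U F ∧ (∑ i : Fin n, U i) = k} =
      sInf {k : ℕ | ∃ A : Finset (Fin n), 1 - α ≤ rel n A m s ∧ A.card = k}) ∧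
    ∀ U F, ILPFeasible n m s α U F →
      (∀ U' F', ILPFeasible n m s α U' F' → (∑ i : Fin n, U i) ≤ ∑ i : Fin n, U' i) →
      1 - α ≤ rel n (Finset.univ.filter (fun i => U i = 1)) m s ∧
        Finset.univ.filter (fun i => U i = 1) ∈ sampleSol n α m s :=
  stmt14_general n m hm s α
end

section
/- Let s_1, ..., s_m ⊆ {1,...,n} and α ∈ [0,1], and suppose (U_1,...,U_n) ∈ {0,1}^n and (F_1,...,F_m) ∈ {0,1}^m satisfy the ILP constraints (I) Σ_{j=1}^m F_j ≥ m·(1−α) and (II) for every i ∈ {1,...,n}, Σ_{j : i ∈ s_j} (1−F_j) ≥ #{j : i ∈ s_j}·(1−U_i). Then the set A := {i : U_i = 1} satisfies rel(A, s_{1:m}) ≥ 1−α. -/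
open MeasureTheory

lemma eq_zero_of_card_le_sum_one_sub {ι : Type*} {t : Finset ι} {f : ι → ℕ}
    (h : (t.card : ℝ) ≤ ∑ j ∈ t, (1 - (f j : ℝ))) : ∀ j ∈ t, f j = 0 := by
  rw [Finset.sum_sub_distrib, Finset.sum_const, nsmul_one] at h
  have hsum : ((∑ j ∈ t, f j : ℕ) : ℝ) ≤ 0 := by push_cast; linarith
  exact Finset.sum_eq_zero_iff.mp (Nat.le_zero.mp (by exact_mod_cast hsum))

namespace ILPFeasible

variable {n m : ℕ} {s : ℕ → Finset (Fin n)} {α : ℝ} {U : Fin n → ℕ} {F : ℕ → ℕ}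

/-- Constraint (II) at a point `i` with `U i = 0` forces `F j = 0` for every sample `s j ∋ i`. -/
lemma subset_of_ne_zero (hUF : ILPFeasible n m s α U F) {j : ℕ} (hj : j ∈ Finset.range m)
    (hFj : F j ≠ 0) : s j ⊆ Finset.univ.filter (fun i => U i = 1) := by
  obtain ⟨hU, -, -, hII⟩ := hUF
  intro i hi
  rw [Finset.mem_filter]
  refine ⟨Finset.mem_univ i, ?_⟩
  by_contra hUi
  have hUi0 : U i = 0 := by have := hU i; omega
  have h := hII i
  rw [hUi0, Nat.cast_zero, sub_zero, mul_one] at h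
  exact hFj (eq_zero_of_card_le_sum_one_sub h j (Finset.mem_filter.mpr ⟨hj, hi⟩))

lemma sum_le_card_covered (hUF : ILPFeasible n m s α U F) :
    ∑ j ∈ Finset.range m, (F j : ℝ) ≤
      ∑ j ∈ Finset.range m,
        if s j ⊆ Finset.univ.filter (fun i => U i = 1) then (1 : ℝ) else 0 := by
  refine Finset.sum_le_sum fun j hj => ?_
  rcases Nat.le_one_iff_eq_zero_or_eq_one.mp (hUF.2.1 j hj) with hFj | hFj
  · rw [hFj, Nat.cast_zero]
    split_ifs <;> norm_num
  · rw [if_pos (hUF.subset_of_ne_zero hj (by omega)), hFj, Nat.cast_one]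

end ILPFeasible

theorem stmt16_general (n m : ℕ) (hm : 0 < m) (s : ℕ → Finset (Fin n))
    (α : ℝ)
    (U : Fin n → ℕ) (F : ℕ → ℕ) (hUF : ILPFeasible n m s α U F) :
    1 - α ≤ rel n (Finset.univ.filter (fun i => U i = 1)) m s := by
  rw [rel, le_div_iff₀ (by exact_mod_cast hm), mul_comm]
  exact hUF.2.2.1.trans hUF.sum_le_card_covered

/-- If `(U, F)` satisfies the ILP constraints, then the set `A = {i : U i = 1}`
satisfies `rel(A, s_{1:m}) ≥ 1 - α`. -/
theorem stmt16 (n m : ℕ) (hm : 0 < m) (s : ℕ → Finset (Fin n))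
    (α : ℝ) (hα : α ∈ Set.Icc (0 : ℝ) 1)
    (U : Fin n → ℕ) (F : ℕ → ℕ) (hUF : ILPFeasible n m s α U F) :
    1 - α ≤ rel n (Finset.univ.filter (fun i => U i = 1)) m s :=
  stmt16_general n m hm s α U F hUF
end
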